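/- arXiv:1708.04213 — 3 statements merged into one kernel-verified Lean document; each statement's English description precedes it below -/
import Mathlib

section
/- Let n ≥ 1 and let α_1,…,α_n, β_1,…,β_{n−1} be admissible rational hypergeometric parameters, i.e. 0 < α_j, β_k < 1 for all j, k and α_j ≠ β_k for all j, k. Let p be a good prime, i.e. v_p(α_j−1) = v_p(β_k−1) = 0 for all j, k, and let M be the least common multiple of the multiplicative orders of p modulo the reduced denominators of the α_j−1 and β_k−1. Then the coefficients A_m = (∏_j (α_j)_m) / ((∏_k (β_k)_m) · m!) of ₙF_{n−1} satisfy v_p(A_{m·p^M}) = v_p(A_m) for all m ≥ 0. -/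
open scoped BigOperators

/-- The `m`-th coefficient `A_m = (a)_m (b)_m / ((c)_m · m!)` of the Gauss
hypergeometric series `₂F₁(a,b;c;z)`. -/
noncomputable def hypCoeff (a b c : ℚ) (m : ℕ) : ℚ :=
  ((ascPochhammer ℚ m).eval a * (ascPochhammer ℚ m).eval b) /
    ((ascPochhammer ℚ m).eval c * (m.factorial : ℚ))

/-- `₂F₁(a,b;c;z)` has `p`-adically unbounded coefficients. -/
def UnboundedAt (p : ℕ) (a b c : ℚ) : Prop :=
  ∀ N : ℕ, ∃ m : ℕ, padicValRat p (hypCoeff a b c m) < -(N : ℤ)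

/-- `(a,b;c)` are admissible hypergeometric parameters. -/
def Admissible (a b c : ℚ) : Prop :=
  0 < a ∧ a < 1 ∧ 0 < b ∧ b < 1 ∧ 0 < c ∧ c < 1 ∧ a ≠ c ∧ b ≠ c

/-- `τ : ℕ → ℤ` is the family of truncations of the rational number `x`
(with `v_p(x) ≥ 0`): `τ j` is the unique integer with `0 ≤ τ j < p^j` and
`v_p(x - τ j) ≥ j` (the latter interpreted as `x = τ j` or `j ≤ v_p(x - τ j)`). -/
def IsTrunc (p : ℕ) (x : ℚ) (τ : ℕ → ℤ) : Prop :=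
  ∀ j : ℕ, 0 ≤ τ j ∧ τ j < (p : ℤ) ^ j ∧
    (x = (τ j : ℚ) ∨ (j : ℤ) ≤ padicValRat p (x - τ j))

/-- The `m`-th coefficient of the generalized hypergeometric series
`ₙF_{n−1}(α_1,…,α_n; β_1,…,β_{n−1}; z)`. -/
noncomputable def genHypCoeff (n : ℕ) (α : Fin n → ℚ) (β : Fin (n - 1) → ℚ)
    (m : ℕ) : ℚ :=
  (∏ j, (ascPochhammer ℚ m).eval (α j)) /
    ((∏ k, (ascPochhammer ℚ m).eval (β k)) * (m.factorial : ℚ))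

/-- The number of carries in the base-`p` addition of `x` and `m`, where
`τ` is the family of truncations of `x`: the number of `j ≥ 1` with
`τ_j(x) + (m mod p^j) ≥ p^j`. -/
noncomputable def carries (p : ℕ) (τ : ℕ → ℤ) (m : ℕ) : ℕ :=
  {j : ℕ | 1 ≤ j ∧ (p : ℤ) ^ j ≤ τ j + ((m % p ^ j : ℕ) : ℤ)}.ncard

/-!
Write `q = p ^ M`. Each parameter `γ = a / d` in `(0, 1]` (the factorial being the case `γ = 1`)
has `p ∤ d` and `d ∣ q - 1`, so `v_p((γ)_k) = ∑_{i<k} v_p(a + i d)`. Cut `[0, m q)` into blocks of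
length `q`. In the block starting at `j q` exactly one term is divisible by `q`, namely
`q (a + j d)`; the others run through the nonzero residues modulo `q`, and below `M` the valuation
only sees the residue. So each block contributes `v_p(a + j d) + v_p(q!)`, whence
`v_p((γ)_{m q}) = v_p((γ)_m) + m v_p(q!)`. The shift does not depend on `γ`, so it cancels between
the `n` Pochhammer symbols upstairs and the `n - 1` symbols and `m!` downstairs.
-/

open Finset Nat

section

variable {p : ℕ} [hp : Fact p.Prime]

theorem padicValRat_finset_prod {ι : Type*} {s : Finset ι} {f : ι → ℚ}
    (hf : ∀ i ∈ s, f i ≠ 0) :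
    padicValRat p (∏ i ∈ s, f i) = ∑ i ∈ s, padicValRat p (f i) := by
  classical
  induction s using Finset.induction_on with
  | empty => simp
  | insert i s hi ih =>
    rw [prod_insert hi, sum_insert hi,
      padicValRat.mul (hf i (mem_insert_self i s))
        (prod_ne_zero_iff.mpr fun j hj => hf j (mem_insert_of_mem hj)),
      ih fun j hj => hf j (mem_insert_of_mem hj)]

theorem sum_range_succ_padicValNat (n : ℕ) :
    ∑ i ∈ range (n + 1), padicValNat p i = padicValNat p n ! := by
  induction n with
  | zero => simp
  | succ n ih =>
    rw [sum_range_succ, ih, factorial_succ, padicValNat.mul (succ_ne_zero n) (factorial_ne_zero n),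
      add_comm]

theorem padicValNat_eq_of_modEq {M x y : ℕ} (h : x ≡ y [MOD p ^ M]) (hy : y ≠ 0)
    (hyM : padicValNat p y < M) : padicValNat p x = padicValNat p y := by
  have hdvd : ∀ k ≤ M, p ^ k ∣ x ↔ p ^ k ∣ y := fun k hk => h.dvd_iff (pow_dvd_pow p hk)
  have hx : x ≠ 0 := by
    rintro rfl
    exact hyM.not_ge ((padicValNat_dvd_iff_le hy).mp ((hdvd M le_rfl).mp (dvd_zero _)))
  apply le_antisymm
  · by_contra! hlt
    have hsucc : p ^ (padicValNat p y + 1) ∣ y :=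
      (hdvd _ hyM).mp ((padicValNat_dvd_iff_le hx).mpr hlt)
    exact (padicValNat_dvd_iff_le hy).mp hsucc |>.not_gt (lt_add_one _)
  · exact (padicValNat_dvd_iff_le hx).mp ((hdvd _ hyM.le).mpr pow_padicValNat_dvd)

/-- The residues `F i % p ^ M` with `i ≠ t` are exactly `1, …, p ^ M - 1`. -/
theorem sum_padicValNat_of_injOn_mod {ι : Type*} {M : ℕ} {s : Finset ι} {F : ι → ℕ}
    (hs : #s = p ^ M) (hinj : Set.InjOn (fun i => F i % p ^ M) s) {t : ι} (ht : t ∈ s)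
    (hFt : p ^ M ∣ F t) :
    ∑ i ∈ s, padicValNat p (F i) = padicValNat p (F t) + padicValNat p (p ^ M - 1)! := by
  classical
  have hq : 0 < p ^ M := pow_pos hp.out.pos M
  have hmaps : Set.MapsTo (fun i => F i % p ^ M) (s.erase t) ((range (p ^ M)).erase 0) := by
    intro i hi
    obtain ⟨hit, his⟩ := mem_erase.mp hi
    refine mem_erase.mpr ⟨fun h0 => hit (hinj his ht ?_), mem_range.mpr (mod_lt _ hq)⟩
    simp only [h0, mod_eq_zero_of_dvd hFt]
  have hinj' : Set.InjOn (fun i => F i % p ^ M) (s.erase t) := hinj.mono (by simp)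
  have hval : ∀ i ∈ s.erase t, padicValNat p (F i) = padicValNat p (F i % p ^ M) := by
    intro i hi
    have hr := mem_erase.mp (hmaps hi)
    refine padicValNat_eq_of_modEq (mod_modEq _ _).symm hr.1 ?_
    exact (padicValNat_le_nat_log _).trans_lt (log_lt_of_lt_pow hr.1 (mem_range.mp hr.2))
  have hsurj := surjOn_of_injOn_of_card_le _ hmaps hinj' (by
    rw [card_erase_of_mem (mem_range.mpr hq), card_range, card_erase_of_mem ht, hs])
  rw [← add_sum_erase s _ ht, sum_nbij _ hmaps hinj' hsurj hval,
    sum_erase _ (padicValNat_zero_right p), ← sub_one_add_one hq.ne', sum_range_succ_padicValNat,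
    add_tsub_cancel_right]

/-- With `q = p ^ M = d e + 1`, the term at `i = a e` is `q (a + m d)`; since `p ∤ d` the terms
are pairwise incongruent modulo `q`. -/
theorem sum_padicValNat_block {a d M : ℕ} (ha : 0 < a) (had : a ≤ d) (hpd : ¬ p ∣ d)
    (hdM : d ∣ p ^ M - 1) (m : ℕ) :
    ∑ i ∈ range (p ^ M), padicValNat p (a + (m * p ^ M + i) * d) =
      padicValNat p (a + m * d) + padicValNat p (p ^ M)! := by
  obtain ⟨e, he⟩ := hdM
  have hq : 0 < p ^ M := pow_pos hp.out.pos M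
  have hq' : d * e + 1 = p ^ M := by omega
  have ht : a * e < p ^ M := by nlinarith [Nat.mul_le_mul_right e had]
  have hFt : a + (m * p ^ M + a * e) * d = p ^ M * (a + m * d) := by
    rw [← hq']; ring
  have hinj : Set.InjOn (fun i => (a + (m * p ^ M + i) * d) % p ^ M) (range (p ^ M)) := by
    intro i hi j hj hij
    have hcop : Nat.gcd (p ^ M) d = 1 :=
      Nat.Coprime.pow_left M ((Nat.Prime.coprime_iff_not_dvd hp.out).mpr hpd)
    have hij' : (a + m * p ^ M * d) + i * d ≡ (a + m * p ^ M * d) + j * d [MOD p ^ M] := by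
      simpa only [Nat.ModEq, add_mul, add_assoc] using hij
    exact ((hij'.add_left_cancel' _).cancel_right_of_coprime hcop).eq_of_lt_of_lt
      (mem_range.mp hi) (mem_range.mp hj)
  rw [sum_padicValNat_of_injOn_mod (card_range _) hinj (mem_range.mpr ht) (hFt ▸ dvd_mul_right _ _),
    hFt, padicValNat.mul hq.ne' (by positivity), padicValNat.prime_pow, ← mul_factorial_pred hq.ne',
    padicValNat.mul hq.ne' (factorial_ne_zero _), padicValNat.prime_pow]
  ring

theorem sum_padicValNat_range_mul_pow {a d M : ℕ} (ha : 0 < a) (had : a ≤ d) (hpd : ¬ p ∣ d)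
    (hdM : d ∣ p ^ M - 1) (m : ℕ) :
    ∑ i ∈ range (m * p ^ M), padicValNat p (a + i * d) =
      ∑ i ∈ range m, padicValNat p (a + i * d) + m * padicValNat p (p ^ M)! := by
  induction m with
  | zero => simp
  | succ m ih =>
    rw [add_one_mul, sum_range_add, ih, sum_padicValNat_block ha had hpd hdM m, sum_range_succ]
    ring

theorem padicValRat_ascPochhammer_eval_div {a d : ℕ} (ha : 0 < a) (hpd : ¬ p ∣ d) (k : ℕ) :
    padicValRat p ((ascPochhammer ℚ k).eval ((a : ℚ) / d)) =
      ∑ i ∈ range k, padicValNat p (a + i * d) := by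
  have hd : (d : ℚ) ≠ 0 := Nat.cast_ne_zero.mpr (by rintro rfl; exact hpd (dvd_zero p))
  induction k with
  | zero => simp
  | succ k ih =>
    have hfactor : (a : ℚ) / d + k = ((a + k * d : ℕ) : ℚ) / d := by
      push_cast; field_simp
    rw [ascPochhammer_succ_eval, padicValRat.mul (ascPochhammer_pos k _ (by positivity)).ne'
      (by positivity), ih, sum_range_succ, hfactor, padicValRat.div (by positivity) hd,
      padicValRat.of_nat, padicValRat.of_nat, padicValNat.eq_zero_of_not_dvd hpd]
    push_cast; ring

theorem padicValRat_ascPochhammer_mul_pow {γ : ℚ} {M : ℕ} (h0 : 0 < γ) (h1 : γ ≤ 1)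
    (hpd : ¬ p ∣ γ.den) (hdM : γ.den ∣ p ^ M - 1) (m : ℕ) :
    padicValRat p ((ascPochhammer ℚ (m * p ^ M)).eval γ) =
      padicValRat p ((ascPochhammer ℚ m).eval γ) + m * padicValNat p (p ^ M)! := by
  have hnum : ((γ.num.toNat : ℕ) : ℚ) = γ.num := by
    exact_mod_cast Int.toNat_of_nonneg (Rat.num_pos.mpr h0).le
  have hγ : γ = (γ.num.toNat : ℚ) / γ.den := by rw [hnum, Rat.num_div_den]
  have ha : 0 < γ.num.toNat := by have := Rat.num_pos.mpr h0; omega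
  have had : γ.num.toNat ≤ γ.den := by
    have : (γ.num.toNat : ℚ) / γ.den ≤ 1 := hγ ▸ h1
    exact_mod_cast (div_le_one (by positivity)).mp this
  rw [hγ, padicValRat_ascPochhammer_eval_div ha hpd, padicValRat_ascPochhammer_eval_div ha hpd,
    sum_padicValNat_range_mul_pow ha had hpd hdM]
  push_cast; ring

theorem padicValRat_genHypCoeff {n : ℕ} {α : Fin n → ℚ} {β : Fin (n - 1) → ℚ}
    (hα : ∀ j, 0 < α j) (hβ : ∀ k, 0 < β k) (m : ℕ) :
    padicValRat p (genHypCoeff n α β m) =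
      ∑ j, padicValRat p ((ascPochhammer ℚ m).eval (α j)) -
        ∑ k, padicValRat p ((ascPochhammer ℚ m).eval (β k)) -
          padicValRat p ((ascPochhammer ℚ m).eval 1) := by
  have hα' : ∀ j ∈ univ, (ascPochhammer ℚ m).eval (α j) ≠ 0 :=
    fun j _ => (ascPochhammer_pos m _ (hα j)).ne'
  have hβ' : ∀ k ∈ univ, (ascPochhammer ℚ m).eval (β k) ≠ 0 :=
    fun k _ => (ascPochhammer_pos m _ (hβ k)).ne'
  have hfac : (m ! : ℚ) ≠ 0 := by positivity
  rw [genHypCoeff, padicValRat.div (prod_ne_zero_iff.mpr hα')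
      (mul_ne_zero (prod_ne_zero_iff.mpr hβ') hfac),
    padicValRat.mul (prod_ne_zero_iff.mpr hβ') hfac, padicValRat_finset_prod hα',
    padicValRat_finset_prod hβ', ascPochhammer_eval_one]
  ring

theorem not_dvd_den_of_padicValRat_nonneg {x : ℚ}
    (h : 0 ≤ padicValRat p x) : ¬ p ∣ x.den := by
  intro hden
  have hnum : padicValInt p x.num = 0 := by
    rw [padicValInt, padicValNat.eq_zero_of_not_dvd]
    exact fun hnum => hp.out.not_dvd_one (x.reduced ▸ Nat.dvd_gcd hnum hden)
  have := one_le_padicValNat_of_dvd x.den_nz hden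
  rw [padicValRat_def, hnum] at h
  omega

end

theorem dvd_pow_sub_one_of_orderOf_dvd {d p M : ℕ} (h : orderOf (p : ZMod d) ∣ M) :
    d ∣ p ^ M - 1 := by
  rcases Nat.eq_zero_or_pos (p ^ M) with hpM | hpM
  · simp [hpM]
  rw [← ZMod.natCast_eq_zero_iff, Nat.cast_sub hpM, Nat.cast_pow, orderOf_dvd_iff_pow_eq_one.mp h,
    Nat.cast_one, sub_self]

/-- Periodicity of valuations: for admissible parameters and a good prime `p`,
with `M` the lcm of the multiplicative orders of `p` modulo the reduced
denominators of the `α_j − 1` and `β_k − 1`, one has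
`v_p(A_{m·p^M}) = v_p(A_m)` for all `m`. -/
theorem stmt_7 (n : ℕ) (hn : 1 ≤ n) (α : Fin n → ℚ) (β : Fin (n - 1) → ℚ)
    (hadm : (∀ j, 0 < α j ∧ α j < 1) ∧ (∀ k, 0 < β k ∧ β k < 1) ∧
      ∀ j k, α j ≠ β k)
    (p : ℕ) (hp : p.Prime)
    (hgood : (∀ j, padicValRat p (α j - 1) = 0) ∧
      (∀ k, padicValRat p (β k - 1) = 0))
    (M : ℕ)
    (hM : M = Nat.lcm
      ((Finset.univ : Finset (Fin n)).lcm fun j => orderOf (p : ZMod (α j - 1).den))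
      ((Finset.univ : Finset (Fin (n - 1))).lcm fun k => orderOf (p : ZMod (β k - 1).den))) :
    ∀ m : ℕ, padicValRat p (genHypCoeff n α β (m * p ^ M)) =
      padicValRat p (genHypCoeff n α β m) := by
  have : Fact p.Prime := ⟨hp⟩
  obtain ⟨hα, hβ, -⟩ := hadm
  have hshift : ∀ γ : ℚ, 0 < γ → γ ≤ 1 → padicValRat p (γ - 1) = 0 →
      orderOf (p : ZMod (γ - 1).den) ∣ M → ∀ m : ℕ,
      padicValRat p ((ascPochhammer ℚ (m * p ^ M)).eval γ) =
        padicValRat p ((ascPochhammer ℚ m).eval γ) + m * padicValNat p (p ^ M)! := by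
    intro γ h0 h1 hval hord
    have hden : (γ - 1).den = γ.den := by simp
    rw [hden] at hord
    exact padicValRat_ascPochhammer_mul_pow h0 h1
      (hden ▸ not_dvd_den_of_padicValRat_nonneg hval.ge) (dvd_pow_sub_one_of_orderOf_dvd hord)
  have hα' := fun j => hshift (α j) (hα j).1 (hα j).2.le (hgood.1 j)
    (hM ▸ (dvd_lcm (mem_univ j)).trans (Nat.dvd_lcm_left _ _))
  have hβ' := fun k => hshift (β k) (hβ k).1 (hβ k).2.le (hgood.2 k)
    (hM ▸ (dvd_lcm (mem_univ k)).trans (Nat.dvd_lcm_right _ _))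
  have h1 := padicValRat_ascPochhammer_mul_pow (p := p) (M := M) one_pos le_rfl
    (by simpa using hp.ne_one) (by simp)
  intro m
  simp only [padicValRat_genHypCoeff (fun j => (hα j).1) (fun k => (hβ k).1), hα', hβ', h1,
    sum_add_distrib, sum_const, Finset.card_univ, Fintype.card_fin, nsmul_eq_mul]
  push_cast [Nat.cast_sub hn]
  ring
end

section
/- Let (a,b;c) and (r,s;t) be two triples of rational numbers such that (i) none of a, b, c, a−c, b−c is an integer, and (ii) a−r, b−s and c−t are all integers. Then for every prime p, the series ₂F₁(a,b;c;z) has p-adically unbounded coefficients if and only if ₂F₁(r,s;t;z) has p-adically unbounded coefficients. -/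
open scoped BigOperators

/-!
A unit shift of one parameter, in either direction, writes the new coefficients as a combination
of the old ones at indices `m` and `m + 1` whose weights are polynomials in `m` with rational
coefficients (Gauss's contiguous relations). Since `|m|_p ≤ 1`, such weights are `p`-adically
bounded, so a unit shift preserves `p`-adic boundedness of the coefficients in both directions;
an integer shift is a chain of unit shifts. The non-integrality hypotheses keep every
intermediate parameter triple away from the values by which the relations divide.
-/

open Filter Asymptotics

lemma ascPochhammer_eval_ne_zero {x : ℚ} (hx : ∀ n : ℕ, x + n ≠ 0) (m : ℕ) :
    (ascPochhammer ℚ m).eval x ≠ 0 := by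
  rw [Ne, ascPochhammer_eval_eq_zero_iff]
  rintro ⟨n, -, hn⟩
  exact hx n (by rw [hn, add_neg_cancel])

lemma mul_ascPochhammer_eval_add_one (x : ℚ) (m : ℕ) :
    x * (ascPochhammer ℚ m).eval (x + 1) = (ascPochhammer ℚ m).eval x * (x + m) := by
  rw [← ascPochhammer_succ_eval, ascPochhammer_succ_left]
  simp

lemma hypCoeff_comm (a b c : ℚ) (m : ℕ) : hypCoeff a b c m = hypCoeff b a c m := by
  rw [hypCoeff, hypCoeff, mul_comm ((ascPochhammer ℚ m).eval a)]

lemma mul_hypCoeff_add_one_left (a b c : ℚ) (m : ℕ) :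
    a * hypCoeff (a + 1) b c m = (a + m) * hypCoeff a b c m := by
  simp only [hypCoeff, ← mul_div_assoc, ← mul_assoc, mul_ascPochhammer_eval_add_one]
  ring

section Identities

variable {a b c : ℚ}

lemma hypCoeff_succ (hc : ∀ n : ℕ, c + n ≠ 0) (m : ℕ) :
    (c + m) * (m + 1) * hypCoeff a b c (m + 1) = (a + m) * (b + m) * hypCoeff a b c m := by
  have hcm := hc m
  have hpc := ascPochhammer_eval_ne_zero hc m
  simp only [hypCoeff, ascPochhammer_succ_eval, Nat.factorial_succ]
  push_cast
  field_simp

lemma mul_hypCoeff_eq_mul_hypCoeff_add_one_right (hc : ∀ n : ℕ, c + n ≠ 0) (m : ℕ) :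
    c * hypCoeff a b c m = (c + m) * hypCoeff a b (c + 1) m := by
  have hc1 : ∀ n : ℕ, c + 1 + n ≠ 0 := fun n h =>
    hc (n + 1) (by push_cast; linarith)
  have hm : (m.factorial : ℚ) ≠ 0 := by positivity
  have hshift := mul_ascPochhammer_eval_add_one c m
  rw [hypCoeff, hypCoeff, mul_div_assoc', mul_div_assoc',
    div_eq_div_iff (mul_ne_zero (ascPochhammer_eval_ne_zero hc m) hm)
      (mul_ne_zero (ascPochhammer_eval_ne_zero hc1 m) hm)]
  linear_combination
    (ascPochhammer ℚ m).eval a * (ascPochhammer ℚ m).eval b * m.factorial * hshift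

lemma hypCoeff_contiguous_left (ha : a ≠ 0) (hc : ∀ n : ℕ, c + n ≠ 0) (m : ℕ) :
    (c - a - 1) * hypCoeff a b c (m + 1) =
      (c - a + m) * hypCoeff (a + 1) b c (m + 1) - (b + m) * hypCoeff (a + 1) b c m := by
  refine mul_left_cancel₀ ha ?_
  have h1 := mul_hypCoeff_add_one_left a b c m
  have h2 := mul_hypCoeff_add_one_left a b c (m + 1)
  have h3 := hypCoeff_succ (a := a) (b := b) hc m
  push_cast at h2
  linear_combination (b + m) * h1 - (c - a + m) * h2 - h3

lemma hypCoeff_contiguous_right (hc : ∀ n : ℕ, c + n ≠ 0) (m : ℕ) :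
    (c - a) * (c - b) * hypCoeff a b (c + 1) m =
      c * ((m + 1) * hypCoeff a b c (m + 1) - (a + b - c + m) * hypCoeff a b c m) := by
  refine mul_left_cancel₀ (hc m) ?_
  have h1 := mul_hypCoeff_eq_mul_hypCoeff_add_one_right (a := a) (b := b) hc m
  have h2 := hypCoeff_succ (a := a) (b := b) hc m
  linear_combination -(c - a) * (c - b) * h1 - c * h2

end Identities

/-- Phrased with the norm of `ℚ_[p]` rather than with `padicValRat`, so that sums and products
are handled by `IsBigO` and vanishing terms need no case split. -/
def PadicBounded (p : ℕ) [Fact p.Prime] (f : ℕ → ℚ) : Prop :=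
  (fun m => (f m : ℚ_[p])) =O[atTop] (fun _ => (1 : ℝ))

namespace PadicBounded

variable {p : ℕ} [Fact p.Prime] {f g : ℕ → ℚ}

lemma const (x : ℚ) : PadicBounded p fun _ => x :=
  isBigO_const_const _ one_ne_zero _

lemma natCast : PadicBounded p fun m => (m : ℚ) :=
  IsBigO.of_bound 1 <| Eventually.of_forall fun m => by
    simpa using IsUltrametricDist.norm_natCast_le_one ℚ_[p] m

lemma add (hf : PadicBounded p f) (hg : PadicBounded p g) :
    PadicBounded p fun m => f m + g m := by
  simpa [PadicBounded] using IsBigO.add hf hg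

lemma sub (hf : PadicBounded p f) (hg : PadicBounded p g) :
    PadicBounded p fun m => f m - g m := by
  simpa [PadicBounded] using IsBigO.sub hf hg

lemma mul (hf : PadicBounded p f) (hg : PadicBounded p g) :
    PadicBounded p fun m => f m * g m := by
  simpa [PadicBounded] using IsBigO.mul hf hg

lemma const_add_natCast (x : ℚ) : PadicBounded p fun m => x + m :=
  (const x).add natCast

lemma comp_succ_iff : (PadicBounded p fun m => f (m + 1)) ↔ PadicBounded p f := by
  conv_rhs => rw [PadicBounded, ← map_add_atTop_eq_nat 1, isBigO_map]
  rfl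

end PadicBounded

lemma Padic.norm_ratCast_le_pow_iff {p : ℕ} [hp : Fact p.Prime] (q : ℚ) (N : ℕ) :
    ‖(q : ℚ_[p])‖ ≤ (p : ℝ) ^ N ↔ -(N : ℤ) ≤ padicValRat p q := by
  rcases eq_or_ne q 0 with rfl | hq
  · simp
  rw [Padic.eq_padicNorm, padicNorm.eq_zpow_of_nonzero hq, Rat.cast_zpow, Rat.cast_natCast,
    ← zpow_natCast, zpow_le_zpow_iff_right₀ (by exact_mod_cast hp.out.one_lt), neg_le]

lemma forall_exists_padicValRat_lt_iff_not_padicBounded {p : ℕ} [hp : Fact p.Prime]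
    (f : ℕ → ℚ) :
    (∀ N : ℕ, ∃ m, padicValRat p (f m) < -(N : ℤ)) ↔ ¬ PadicBounded p f := by
  have hbdd : PadicBounded p f ↔ ∃ N : ℕ, ∀ m, ‖(f m : ℚ_[p])‖ ≤ (p : ℝ) ^ N := by
    rw [PadicBounded, isBigO_one_iff]
    refine ⟨fun h => ?_, fun ⟨N, hN⟩ => ?_⟩
    · obtain ⟨C, hC⟩ := h.bddAbove_range
      have hp1 : (1 : ℝ) < p := by exact_mod_cast hp.out.one_lt
      obtain ⟨N, hN⟩ := pow_unbounded_of_one_lt C hp1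
      exact ⟨N, fun m => (hC ⟨m, rfl⟩).trans hN.le⟩
    · exact BddAbove.isBoundedUnder_of_range ⟨_, Set.forall_mem_range.2 hN⟩
  simp only [hbdd, Padic.norm_ratCast_le_pow_iff, not_exists, not_forall, not_le]

lemma iff_add_intCast_of_forall_iff_add_one {α : Type*} [AddGroupWithOne α] {P : α → Prop}
    {x : α} (h : ∀ k : ℤ, P (x + k + 1) ↔ P (x + k)) (z : ℤ) : P (x + z) ↔ P x := by
  induction z using Int.induction_on with
  | zero => simp
  | succ k ih =>
    rw [Int.cast_add, Int.cast_one, ← add_assoc]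
    exact (h k).trans ih
  | pred k ih =>
    have hk := h (-k - 1)
    push_cast at hk ih ⊢
    rw [add_assoc, sub_add_cancel] at hk
    exact hk.symm.trans ih

section Shifts

open PadicBounded

variable {p : ℕ} [Fact p.Prime] {a b c : ℚ}

lemma padicBounded_hypCoeff_add_one_left_iff (ha : a ≠ 0) (hac : c - a - 1 ≠ 0)
    (hc : ∀ n : ℕ, c + n ≠ 0) :
    PadicBounded p (hypCoeff (a + 1) b c) ↔ PadicBounded p (hypCoeff a b c) := by
  constructor
  · intro h
    have hA : (fun m => hypCoeff a b c (m + 1)) = fun m => (c - a - 1)⁻¹ *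
        ((c - a + m) * hypCoeff (a + 1) b c (m + 1) - (b + m) * hypCoeff (a + 1) b c m) := by
      funext m
      rw [← hypCoeff_contiguous_left ha hc, inv_mul_cancel_left₀ hac]
    rw [← comp_succ_iff, hA]
    exact (const _).mul (((const_add_natCast _).mul (comp_succ_iff.2 h)).sub
      ((const_add_natCast _).mul h))
  · intro h
    have hA : hypCoeff (a + 1) b c = fun m => a⁻¹ * ((a + m) * hypCoeff a b c m) := by
      funext m
      rw [← mul_hypCoeff_add_one_left, inv_mul_cancel_left₀ ha]
    rw [hA]
    exact (const _).mul ((const_add_natCast a).mul h)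

lemma padicBounded_hypCoeff_add_one_right_iff (hc : ∀ n : ℕ, c + n ≠ 0) (hca : c - a ≠ 0)
    (hcb : c - b ≠ 0) :
    PadicBounded p (hypCoeff a b (c + 1)) ↔ PadicBounded p (hypCoeff a b c) := by
  constructor
  · intro h
    have hc0 : c ≠ 0 := by simpa using hc 0
    have hA : hypCoeff a b c = fun m => c⁻¹ * ((c + m) * hypCoeff a b (c + 1) m) := by
      funext m
      rw [← mul_hypCoeff_eq_mul_hypCoeff_add_one_right hc, inv_mul_cancel_left₀ hc0]
    rw [hA]
    exact (const _).mul ((const_add_natCast c).mul h)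
  · intro h
    have hA : hypCoeff a b (c + 1) = fun m => ((c - a) * (c - b))⁻¹ *
        (c * ((m + 1) * hypCoeff a b c (m + 1) - (a + b - c + m) * hypCoeff a b c m)) := by
      funext m
      rw [← hypCoeff_contiguous_right hc, inv_mul_cancel_left₀ (mul_ne_zero hca hcb)]
    rw [hA]
    exact (const _).mul ((const c).mul ((natCast.add (const 1)).mul (comp_succ_iff.2 h) |>.sub
      ((const_add_natCast _).mul h)))

lemma padicBounded_hypCoeff_add_intCast_left_iff (ha : ∀ z : ℤ, a ≠ z)
    (hac : ∀ z : ℤ, a - c ≠ z) (hc : ∀ n : ℕ, c + n ≠ 0) (z : ℤ) :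
    PadicBounded p (hypCoeff (a + z) b c) ↔ PadicBounded p (hypCoeff a b c) :=
  iff_add_intCast_of_forall_iff_add_one (P := fun x => PadicBounded p (hypCoeff x b c))
    (fun k => padicBounded_hypCoeff_add_one_left_iff (fun h => ha (-k) (by push_cast; linarith))
      (fun h => hac (-k - 1) (by push_cast; linarith)) hc) z

lemma padicBounded_hypCoeff_add_intCast_mid_iff (hb : ∀ z : ℤ, b ≠ z)
    (hbc : ∀ z : ℤ, b - c ≠ z) (hc : ∀ n : ℕ, c + n ≠ 0) (z : ℤ) :
    PadicBounded p (hypCoeff a (b + z) c) ↔ PadicBounded p (hypCoeff a b c) := by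
  simp only [funext (hypCoeff_comm a _ c)]
  exact padicBounded_hypCoeff_add_intCast_left_iff hb hbc hc z

lemma padicBounded_hypCoeff_add_intCast_right_iff (hc : ∀ z : ℤ, c ≠ z)
    (hac : ∀ z : ℤ, a - c ≠ z) (hbc : ∀ z : ℤ, b - c ≠ z) (z : ℤ) :
    PadicBounded p (hypCoeff a b (c + z)) ↔ PadicBounded p (hypCoeff a b c) :=
  iff_add_intCast_of_forall_iff_add_one (P := fun x => PadicBounded p (hypCoeff a b x))
    (fun k => padicBounded_hypCoeff_add_one_right_iff
      (fun n h => hc (-k - n) (by push_cast; linarith))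
      (fun h => hac k (by linarith)) (fun h => hbc k (by linarith))) z

end Shifts

/-- Integer shifts of hypergeometric parameters do not affect `p`-adic
(un)boundedness of coefficients: if none of `a, b, c, a−c, b−c` is an integer and
`a−r, b−s, c−t` are integers, then for every prime `p`, `₂F₁(a,b;c;z)` has
`p`-adically unbounded coefficients iff `₂F₁(r,s;t;z)` does. -/
theorem stmt_11 (a b c r s t : ℚ)
    (ha : ∀ z : ℤ, a ≠ (z : ℚ)) (hb : ∀ z : ℤ, b ≠ (z : ℚ))
    (hc : ∀ z : ℤ, c ≠ (z : ℚ))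
    (hac : ∀ z : ℤ, a - c ≠ (z : ℚ)) (hbc : ∀ z : ℤ, b - c ≠ (z : ℚ))
    (har : ∃ z : ℤ, a - r = (z : ℚ)) (hbs : ∃ z : ℤ, b - s = (z : ℚ))
    (hct : ∃ z : ℤ, c - t = (z : ℚ))
    (p : ℕ) (hp : p.Prime) :
    UnboundedAt p a b c ↔ UnboundedAt p r s t := by
  have := Fact.mk hp
  obtain ⟨i, hi⟩ := har
  obtain ⟨j, hj⟩ := hbs
  obtain ⟨k, hk⟩ := hct
  obtain rfl : r = a + ((-i : ℤ) : ℚ) := by push_cast; linarith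
  obtain rfl : s = b + ((-j : ℤ) : ℚ) := by push_cast; linarith
  obtain rfl : t = c + ((-k : ℤ) : ℚ) := by push_cast; linarith
  have ht : ∀ n : ℕ, c + ((-k : ℤ) : ℚ) + n ≠ 0 := fun n h =>
    hc (k - n) (by push_cast at h ⊢; linarith)
  have hat : ∀ z : ℤ, a - (c + ((-k : ℤ) : ℚ)) ≠ z := fun z h =>
    hac (z - k) (by push_cast at h ⊢; linarith)
  have hbt : ∀ z : ℤ, b - (c + ((-k : ℤ) : ℚ)) ≠ z := fun z h =>
    hbc (z - k) (by push_cast at h ⊢; linarith)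
  rw [UnboundedAt, UnboundedAt, forall_exists_padicValRat_lt_iff_not_padicBounded,
    forall_exists_padicValRat_lt_iff_not_padicBounded, not_iff_not,
    padicBounded_hypCoeff_add_intCast_left_iff ha hat ht,
    padicBounded_hypCoeff_add_intCast_mid_iff hb hbt ht,
    padicBounded_hypCoeff_add_intCast_right_iff hc hac hbc]
end

section
/- For every prime p ≥ 7 and every m ≥ 0, the m-th coefficient A_m of ₂F₁(1/6, 5/6; 1/5; z) satisfies v_p(A_m) ≥ 0; that is, the coefficients of ₂F₁(1/6, 5/6; 1/5; z) are p-integral for all primes p ≥ 7. -/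
open scoped BigOperators

/-!
Clearing the denominators `6` and `5`, which are `p`-adic units, in
`A_m = ∏_{k<m} (1/6 + k)(5/6 + k) / ((1/5 + k)(1 + k))`, Legendre's counting gives
`v_p(A_m) = ∑_{j ≥ 1} (N_j(1,6) + N_j(5,6) - N_j(1,5) - N_j(1,1))`, where `N_j(a,d)` counts the
`k < m` with `p^j ∣ a + dk`. For `q = p^j` prime to `d` these `k` form one residue class
`k ≡ r (mod q)`, `r < q` being the first such index, so `N_j(a,d)` decreases as `r` grows.
Since `q ≡ ±1 (mod 6)`, one of `1 + 6k`, `5 + 6k` first hits a multiple of `q` at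
`k = ⌊q/6⌋ ≤ (q - 1)/5`, no later than `1 + 5k` does, and the other one no later than at
`k = q - 1`, where `1 + k` does.
-/

open Finset

namespace Nat

variable {q a d r r' : ℕ}

theorem exists_lt_dvd_add_mul (hq : 0 < q) (hd : d.Coprime q) (a : ℕ) :
    ∃ r < q, q ∣ a + d * r := by
  have : NeZero q := ⟨hq.ne'⟩
  refine ⟨(-(a : ZMod q) * (d : ZMod q)⁻¹).val, ZMod.val_lt _, ?_⟩
  rw [← ZMod.natCast_eq_zero_iff]
  push_cast
  rw [ZMod.natCast_zmod_val]
  linear_combination (-(a : ZMod q)) * ZMod.coe_mul_inv_eq_one d hd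

theorem card_filter_dvd_add_mul_eq_count (hd : d.Coprime q) (hr : q ∣ a + d * r) (m : ℕ) :
    #{k ∈ range m | q ∣ a + d * k} = m.count (· ≡ r [MOD q]) := by
  rw [count_eq_card_filter_range]
  refine congrArg card (filter_congr fun k _ => ?_)
  have hu : IsUnit (d : ZMod q) := (ZMod.unitOfCoprime d hd).isUnit
  rw [← ZMod.natCast_eq_zero_iff] at hr ⊢
  rw [← ZMod.natCast_eq_natCast_iff]
  push_cast at hr ⊢
  constructor
  · intro hk
    have : (d : ZMod q) * (k - r) = 0 := by linear_combination hk - hr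
    exact sub_eq_zero.1 (hu.mul_right_eq_zero.1 this)
  · intro hk
    rw [hk, hr]

theorem count_modEq_le_of_le (hrr' : r ≤ r') (hr' : r' < q) (m : ℕ) :
    m.count (· ≡ r' [MOD q]) ≤ m.count (· ≡ r [MOD q]) := by
  have hq : 0 < q := by omega
  rw [count_modEq_card _ hq, count_modEq_card _ hq, mod_eq_of_lt hr',
    mod_eq_of_lt (hrr'.trans_lt hr')]
  split_ifs <;> omega

theorem card_filter_dvd_add_mul_le {a' d' : ℕ} (hd : d.Coprime q) (hd' : d'.Coprime q)
    (hr : q ∣ a + d * r) (hr' : q ∣ a' + d' * r') (hrr' : r ≤ r') (hr'q : r' < q) (m : ℕ) :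
    #{k ∈ range m | q ∣ a' + d' * k} ≤ #{k ∈ range m | q ∣ a + d * k} := by
  rw [card_filter_dvd_add_mul_eq_count hd hr, card_filter_dvd_add_mul_eq_count hd' hr']
  exact count_modEq_le_of_le hrr' hr'q m

theorem mod_six_eq_one_or_five_of_coprime (h6 : Coprime 6 q) : q % 6 = 1 ∨ q % 6 = 5 := by
  rw [Coprime, gcd_rec] at h6
  have : q % 6 < 6 := mod_lt q (by norm_num)
  interval_cases h : q % 6 <;> simp_all

theorem card_filter_dvd_denominators_le_numerators (h5 : Coprime 5 q) (h6 : Coprime 6 q)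
    (m : ℕ) :
    #{k ∈ range m | q ∣ 1 + 5 * k} + #{k ∈ range m | q ∣ 1 + 1 * k} ≤
      #{k ∈ range m | q ∣ 1 + 6 * k} + #{k ∈ range m | q ∣ 5 + 6 * k} := by
  have hq : 0 < q := pos_of_ne_zero (by rintro rfl; simp at h6)
  have h1 : Coprime 1 q := coprime_one_left q
  have hlast : q ∣ 1 + 1 * (q - 1) := ⟨1, by omega⟩
  obtain ⟨r, hrq, hr⟩ := exists_lt_dvd_add_mul hq h5 1
  have hr_ge : q ≤ 1 + 5 * r := le_of_dvd (by omega) hr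
  rcases mod_six_eq_one_or_five_of_coprime h6 with hq6 | hq6
  · have early : q ∣ 1 + 6 * (q / 6) := ⟨1, by omega⟩
    have late : q ∣ 5 + 6 * (q - 1 - q / 6) := ⟨5, by omega⟩
    exact add_le_add
      (card_filter_dvd_add_mul_le h6 h5 early hr (by omega) hrq m)
      (card_filter_dvd_add_mul_le h6 h1 late hlast (by omega) (by omega) m)
  · have early : q ∣ 5 + 6 * (q / 6) := ⟨1, by omega⟩
    have late : q ∣ 1 + 6 * (q - 1 - q / 6) := ⟨5, by omega⟩
    rw [add_comm #{k ∈ range m | q ∣ 1 + 6 * k}]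
    exact add_le_add
      (card_filter_dvd_add_mul_le h6 h5 early hr (by omega) hrq m)
      (card_filter_dvd_add_mul_le h6 h1 late hlast (by omega) (by omega) m)

theorem factorization_prod_add_mul {p b m : ℕ} (hp : p.Prime) (ha : 0 < a)
    (hb : a + d * m < p ^ b) :
    (∏ k ∈ range m, (a + d * k)).factorization p =
      ∑ j ∈ Ico 1 b, #{k ∈ range m | p ^ j ∣ a + d * k} := by
  rw [factorization_prod fun k _ => by omega, Finsupp.finsetSum_apply]
  have hterm : ∀ k ∈ range m,
      (a + d * k).factorization p = #{j ∈ Ico 1 b | p ^ j ∣ a + d * k} :=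
    fun k hk => factorization_eq_card_pow_dvd_of_lt hp (by omega)
      (lt_of_le_of_lt (by gcongr; exact (mem_range.1 hk).le) hb)
  rw [sum_congr rfl hterm]
  simp only [card_filter]
  exact sum_comm

end Nat

theorem ascPochhammer_eval_natCast_div {a d : ℕ} (hd : d ≠ 0) (m : ℕ) :
    (ascPochhammer ℚ m).eval ((a : ℚ) / d) =
      ((∏ k ∈ range m, (a + d * k) : ℕ) : ℚ) / d ^ m := by
  induction m with
  | zero => simp
  | succ m ih =>
    rw [ascPochhammer_succ_eval, ih, prod_range_succ]
    push_cast
    field_simp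
    ring

theorem padicValRat_ascPochhammer_eval_natCast_div {p a d b m : ℕ} (hp : p.Prime)
    (hd : ¬ p ∣ d) (ha : 0 < a) (hb : a + d * m < p ^ b) :
    padicValRat p ((ascPochhammer ℚ m).eval ((a : ℚ) / d)) =
      ∑ j ∈ Ico 1 b, #{k ∈ range m | p ^ j ∣ a + d * k} := by
  have : Fact p.Prime := ⟨hp⟩
  have hd0 : d ≠ 0 := by rintro rfl; exact hd (dvd_zero p)
  have hprod : ∏ k ∈ range m, (a + d * k) ≠ 0 := prod_ne_zero_iff.2 fun k _ => by omega
  rw [ascPochhammer_eval_natCast_div hd0,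
    padicValRat.div (by exact_mod_cast hprod) (pow_ne_zero _ (by exact_mod_cast hd0)),
    padicValRat.pow, padicValRat.of_nat, padicValRat.of_nat,
    padicValNat.eq_zero_of_not_dvd hd, ← Nat.factorization_def _ hp,
    Nat.factorization_prod_add_mul hp ha hb]
  simp

theorem padicValRat_hypCoeff {p : ℕ} [Fact p.Prime] {a b c : ℚ} (ha : 0 < a) (hb : 0 < b)
    (hc : 0 < c) (m : ℕ) :
    padicValRat p (hypCoeff a b c m) =
      padicValRat p ((ascPochhammer ℚ m).eval a) + padicValRat p ((ascPochhammer ℚ m).eval b) -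
        padicValRat p ((ascPochhammer ℚ m).eval c) -
          padicValRat p ((ascPochhammer ℚ m).eval 1) := by
  have hpos : ∀ x : ℚ, 0 < x → (ascPochhammer ℚ m).eval x ≠ 0 :=
    fun x hx => (ascPochhammer_pos m x hx).ne'
  rw [hypCoeff, ← ascPochhammer_eval_one, padicValRat.div (mul_ne_zero (hpos a ha) (hpos b hb))
      (mul_ne_zero (hpos c hc) (hpos 1 one_pos)),
    padicValRat.mul (hpos a ha) (hpos b hb), padicValRat.mul (hpos c hc) (hpos 1 one_pos)]
  ring

/-- For every prime `p ≥ 7`, the coefficients of `₂F₁(1/6, 5/6; 1/5; z)` are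
`p`-integral. -/
theorem stmt_19 (p : ℕ) (hp : p.Prime) (hp7 : 7 ≤ p) :
    ∀ m : ℕ, 0 ≤ padicValRat p (hypCoeff (1 / 6) (5 / 6) (1 / 5) m) := by
  have : Fact p.Prime := ⟨hp⟩
  intro m
  have hndvd : ∀ n, 0 < n → n < 7 → ¬ p ∣ n := fun n hn hn7 h => by
    have := Nat.le_of_dvd hn h; omega
  have hbound : ∀ n, n ≤ 5 + 6 * m → n < p ^ (6 * m + 6) := fun n hn =>
    (show n < 2 ^ (6 * m + 6) from lt_of_le_of_lt (by omega) Nat.lt_two_pow_self).trans_le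
      (Nat.pow_le_pow_left (by omega) _)
  have hval := fun a d (hd : 0 < d ∧ d < 7) (ha : 0 < a) (had : a + d * m ≤ 5 + 6 * m) =>
    padicValRat_ascPochhammer_eval_natCast_div hp (hndvd d hd.1 hd.2) ha (hbound _ had)
  have v16 := hval 1 6 (by norm_num) one_pos (by omega)
  have v56 := hval 5 6 (by norm_num) (by norm_num) (by omega)
  have v15 := hval 1 5 (by norm_num) one_pos (by omega)
  have v11 := hval 1 1 (by norm_num) one_pos (by omega)
  simp only [Nat.cast_one, Nat.cast_ofNat, div_one] at v16 v56 v15 v11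
  rw [padicValRat_hypCoeff (by norm_num) (by norm_num) (by norm_num), v16, v56, v15, v11]
  have hcoprime : ∀ n j, 0 < n → n < 7 → Nat.Coprime n (p ^ j) := fun n j hn hn7 =>
    ((hp.coprime_iff_not_dvd.2 (hndvd n hn hn7)).symm).pow_right j
  have key := sum_le_sum fun j (_ : j ∈ Ico 1 (6 * m + 6)) =>
    Nat.card_filter_dvd_denominators_le_numerators (hcoprime 5 j (by norm_num) (by norm_num))
      (hcoprime 6 j (by norm_num) (by norm_num)) m
  rw [sum_add_distrib, sum_add_distrib] at key
  rw [sub_sub, sub_nonneg]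
  exact_mod_cast key
end
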